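/- arXiv:0911.0434 — 3 statements merged into one kernel-verified Lean document; each statement's English description precedes it below -/
import Mathlib

section
/- With the setup of the iteration map Θ(Λ) = ∫ Λ^{1/2} G (Ψ/(G*ΛG)) G* Λ^{1/2}, for any positive semidefinite Hermitian Λ such that G*ΛG > 0 on the unit circle, the kernel of Θ(Λ) equals the kernel of Λ; in particular Θ(Λ) has the same rank as Λ, and if Λ > 0 then Θ(Λ) > 0. -/
open Matrix MeasureTheory Real Filter
open scoped ComplexOrder

noncomputable section

abbrev Mat (n : ℕ) := Matrix (Fin n) (Fin n) ℂ
abbrev Vec (n : ℕ) := Matrix (Fin n) (Fin 1) ℂ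

/-- the point e^{jθ} on the unit circle -/
def circPt (θ : ℝ) : ℂ := Complex.exp (θ * Complex.I)

/-- G(e^{jθ}) = (e^{jθ} I - A)⁻¹ B -/
def Gm {n : ℕ} (A : Mat n) (B : Vec n) (θ : ℝ) : Vec n :=
  (circPt θ • (1 : Mat n) - A)⁻¹ * B

/-- the scalar G* Λ G at e^{jθ} -/
def quad {n : ℕ} (A : Mat n) (B : Vec n) (Λ : Mat n) (θ : ℝ) : ℂ :=
  ((Gm A B θ)ᴴ * Λ * Gm A B θ) 0 0

/-- normalized entrywise matrix integral over the unit circle -/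
def mInt {n : ℕ} (f : ℝ → Mat n) : Mat n :=
  Matrix.of fun i j => (1 / (2 * π) : ℝ) • ∫ θ in (0:ℝ)..(2 * π), f θ i j

/-- normalized scalar (complex) integral over the unit circle -/
def sInt (f : ℝ → ℂ) : ℂ := (1 / (2 * π) : ℝ) • ∫ θ in (0:ℝ)..(2 * π), f θ

/-- normalized scalar (real) integral over the unit circle -/
def sIntR (f : ℝ → ℝ) : ℝ := (1 / (2 * π)) * ∫ θ in (0:ℝ)..(2 * π), f θ

/-- all eigenvalues of A lie in the open unit disc -/
def IsStable {n : ℕ} (A : Mat n) : Prop := ∀ μ ∈ spectrum ℂ A, ‖μ‖ < 1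

/-- (A,B) is a reachable pair: the controllability matrix has full rank -/
def Reachable {n : ℕ} (A : Mat n) (B : Vec n) : Prop :=
  (Matrix.of fun (i : Fin n) (k : Fin n) => (A ^ (k : ℕ) * B) i 0).rank = n

open scoped Classical in
/-- positive semidefinite square root (junk value 0 off the psd cone) -/
def msqrt {n : ℕ} (M : Mat n) : Mat n :=
  if h : M.PosSemidef then
    (h.1.eigenvectorUnitary : Mat n) * diagonal ((↑) ∘ Real.sqrt ∘ h.1.eigenvalues) *
      (star h.1.eigenvectorUnitary : Mat n) else 0

/-- the moment map ∫ G (Ψ/(G*ΛG)) G* -/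
def moment {n : ℕ} (A : Mat n) (B : Vec n) (Ψ : ℝ → ℝ) (Λ : Mat n) : Mat n :=
  mInt (fun θ => ((Ψ θ : ℂ) / quad A B Λ θ) • (Gm A B θ * (Gm A B θ)ᴴ))

/-- the iteration map Θ(Λ) = ∫ Λ^{1/2} G (Ψ/(G*ΛG)) G* Λ^{1/2} -/
def Theta {n : ℕ} (A : Mat n) (B : Vec n) (Ψ : ℝ → ℝ) (Λ : Mat n) : Mat n :=
  mInt (fun θ => ((Ψ θ : ℂ) / quad A B Λ θ) •
    (msqrt Λ * (Gm A B θ * (Gm A B θ)ᴴ) * msqrt Λ))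

/-- the linearization M of Θ at Λ:
M(X) = X - Λ^{1/2} ∫ (GΨG*/(G*ΛG)) (G*XG/(G*ΛG)) Λ^{1/2} -/
def Mlin {n : ℕ} (A : Mat n) (B : Vec n) (Ψ : ℝ → ℝ) (Λ : Mat n) (X : Mat n) : Mat n :=
  X - msqrt Λ * mInt (fun θ =>
    (((Ψ θ : ℂ) * (((Gm A B θ)ᴴ * X * Gm A B θ) 0 0)) / (quad A B Λ θ) ^ 2) •
      (Gm A B θ * (Gm A B θ)ᴴ)) * msqrt Λ

/-- the range of the operator Γ : Φ ↦ ∫ G Φ G* on continuous (2π-periodic) functions -/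
def RangeGamma {n : ℕ} (A : Mat n) (B : Vec n) : Set (Mat n) :=
  {M | ∃ Φ : ℝ → ℝ, Continuous Φ ∧ (∀ θ, Φ (θ + 2 * π) = Φ θ) ∧
    M = mInt (fun θ => (Φ θ : ℂ) • (Gm A B θ * (Gm A B θ)ᴴ))}

/-!
Since `Λ^{1/2}` is Hermitian, `Θ(Λ) = Λ^{1/2} M Λ^{1/2}` with `M = ∫ G (Ψ / G*ΛG) G*`, so
everything follows once `M` is positive definite. For `v ≠ 0`, `v* M v = ∫ (Ψ / G*ΛG) |G* v|²`
can only vanish if `v* (zI - A)⁻¹ B = 0` on the whole unit circle. Then the polynomial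
`v* adj(zI - A) B` has infinitely many roots, so it is zero; its behaviour at `z = ∞` together
with `adj(zI - A) A = z adj(zI - A) - det(zI - A)` gives `v* A^k B = 0` for every `k`, which
reachability forbids.
-/

section KernelAndRank

variable {K : Type*} [Field K] {m l : Type*} [Fintype m]

lemma ker_mulVecLin_eq_of_mulVec_eq_zero_iff {M N : Matrix l m K}
    (h : ∀ v, M *ᵥ v = 0 ↔ N *ᵥ v = 0) :
    LinearMap.ker M.mulVecLin = LinearMap.ker N.mulVecLin := by
  ext v
  simp [h]

lemma rank_eq_of_mulVec_eq_zero_iff {M N : Matrix l m K}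
    (h : ∀ v, M *ᵥ v = 0 ↔ N *ᵥ v = 0) : M.rank = N.rank := by
  have hM := LinearMap.finrank_range_add_finrank_ker M.mulVecLin
  have hN := LinearMap.finrank_range_add_finrank_ker N.mulVecLin
  rw [ker_mulVecLin_eq_of_mulVec_eq_zero_iff h] at hM
  rw [rank, rank]
  omega

lemma isUnit_iff_of_mulVec_eq_zero_iff [DecidableEq m] {M N : Matrix m m K}
    (h : ∀ v, M *ᵥ v = 0 ↔ N *ᵥ v = 0) : IsUnit M ↔ IsUnit N := by
  rw [← mulVec_injective_iff_isUnit, ← mulVec_injective_iff_isUnit, ← coe_mulVecLin,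
    ← coe_mulVecLin, ← LinearMap.ker_eq_bot, ← LinearMap.ker_eq_bot,
    ker_mulVecLin_eq_of_mulVec_eq_zero_iff h]

end KernelAndRank

section QuadraticForm

variable {𝕜 : Type*} [RCLike 𝕜] {m : Type*} [Fintype m]

lemma Matrix.IsHermitian.mulVec_eq_zero_iff_of_mul_self_eq {S Λ : Matrix m m 𝕜}
    (hS : S.IsHermitian) (h : S * S = Λ) (v : m → 𝕜) : S *ᵥ v = 0 ↔ Λ *ᵥ v = 0 := by
  refine ⟨fun hv => by rw [← h, ← mulVec_mulVec, hv, mulVec_zero], fun hv => ?_⟩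
  rw [← dotProduct_star_self_eq_zero, star_mulVec, hS.eq, ← dotProduct_mulVec, mulVec_mulVec, h,
    hv, dotProduct_zero]

lemma Matrix.PosDef.mul_mul_mulVec_eq_zero_iff {M S : Matrix m m 𝕜} (hM : M.PosDef)
    (hS : S.IsHermitian) (v : m → 𝕜) : (S * M * S) *ᵥ v = 0 ↔ S *ᵥ v = 0 := by
  refine ⟨fun hv => ?_, fun hv => by rw [← mulVec_mulVec, hv, mulVec_zero]⟩
  by_contra hSv
  have := hM.dotProduct_mulVec_pos hSv
  simp only [star_mulVec, hS.eq, dotProduct_mulVec, vecMul_vecMul] at this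
  rw [← dotProduct_mulVec, hv, dotProduct_zero] at this
  exact this.false

lemma star_dotProduct_mul_conjTranspose_mulVec (G : Matrix m (Fin 1) ℂ) (v : m → ℂ) :
    star v ⬝ᵥ ((G * Gᴴ) *ᵥ v) = Complex.normSq ((Gᴴ *ᵥ v) 0) := by
  have : star v ᵥ* G = star (Gᴴ *ᵥ v) := by rw [star_mulVec, conjTranspose_conjTranspose]
  rw [← mulVec_mulVec, dotProduct_mulVec, this, dotProduct, Fin.sum_univ_one,
    Complex.normSq_eq_conj_mul_self]
  rfl

end QuadraticForm

section AdjugatePolynomial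

open Polynomial

variable {K : Type*} [Field K] {m : Type*} [Fintype m] [DecidableEq m]

lemma adjugate_charmatrix_map_eval (A : Matrix m m K) (z : K) :
    (charmatrix A).adjugate.map (eval z) = (z • (1 : Matrix m m K) - A).adjugate := by
  have h : (charmatrix A).map (eval z) = z • (1 : Matrix m m K) - A := by
    ext i j
    by_cases hij : i = j <;> simp [hij, charmatrix_apply_eq, charmatrix_apply_ne, one_apply]
  rw [← h]
  exact (evalRingHom z).map_adjugate (charmatrix A)

lemma dotProduct_adjugate_mulVec_eq_zero_of_infinite (A : Matrix m m K)
    (w u : m → K) {s : Set K} (hs : s.Infinite)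
    (h : ∀ z ∈ s, w ⬝ᵥ ((z • (1 : Matrix m m K) - A).adjugate *ᵥ u) = 0) (z : K) :
    w ⬝ᵥ ((z • (1 : Matrix m m K) - A).adjugate *ᵥ u) = 0 := by
  set p : K[X] := (C ∘ w) ⬝ᵥ ((charmatrix A).adjugate *ᵥ (C ∘ u))
  have hp : ∀ z, p.eval z = w ⬝ᵥ ((z • (1 : Matrix m m K) - A).adjugate *ᵥ u) := by
    intro z
    rw [← adjugate_charmatrix_map_eval]
    simp [p, dotProduct, mulVec, eval_finsetSum]
  have : p = 0 := eq_zero_of_infinite_isRoot p (hs.mono fun z hz => by simpa [hp] using h z hz)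
  rw [← hp, this, eval_zero]

end AdjugatePolynomial

section AdjugateLimit

variable {𝕜 : Type*} [NontriviallyNormedField 𝕜] {m : Type*} [Fintype m] [DecidableEq m]

lemma dotProduct_eq_zero_of_forall_adjugate {A : Matrix m m 𝕜} {w u : m → 𝕜}
    (h : ∀ z : 𝕜, w ⬝ᵥ ((z • (1 : Matrix m m 𝕜) - A).adjugate *ᵥ u) = 0) : w ⬝ᵥ u = 0 := by
  set f : 𝕜 → 𝕜 := fun s => w ⬝ᵥ ((1 - s • A).adjugate *ᵥ u)
  have hf : Continuous f := by fun_prop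
  have hf0 : Set.EqOn f (fun _ => 0) {0}ᶜ := fun s (hs : s ≠ 0) => by
    change w ⬝ᵥ ((1 - s • A).adjugate *ᵥ u) = 0
    rw [show (1 : Matrix m m 𝕜) - s • A = s • (s⁻¹ • (1 : Matrix m m 𝕜) - A) by
      rw [smul_sub, smul_smul, mul_inv_cancel₀ hs, one_smul]]
    simp [adjugate_smul, smul_mulVec, h]
  simpa [f] using congrFun (hf.ext_on (dense_compl_singleton 0) continuous_const hf0) 0

lemma dotProduct_adjugate_mulVec_mulVec_eq_zero {A : Matrix m m 𝕜} {w u : m → 𝕜}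
    (h : ∀ z : 𝕜, w ⬝ᵥ ((z • (1 : Matrix m m 𝕜) - A).adjugate *ᵥ u) = 0) (z : 𝕜) :
    w ⬝ᵥ ((z • (1 : Matrix m m 𝕜) - A).adjugate *ᵥ (A *ᵥ u)) = 0 := by
  set M := z • (1 : Matrix m m 𝕜) - A
  have hA : M.adjugate * A = z • M.adjugate - M.det • 1 := by
    rw [show A = z • 1 - M by simp [M], mul_sub, adjugate_mul, Matrix.mul_smul, mul_one]
  rw [mulVec_mulVec, hA, sub_mulVec, smul_mulVec, smul_mulVec, one_mulVec, dotProduct_sub,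
    dotProduct_smul, dotProduct_smul, h z, dotProduct_eq_zero_of_forall_adjugate h]
  simp

lemma dotProduct_pow_mulVec_eq_zero_of_forall_adjugate {A : Matrix m m 𝕜} {w u : m → 𝕜}
    (h : ∀ z : 𝕜, w ⬝ᵥ ((z • (1 : Matrix m m 𝕜) - A).adjugate *ᵥ u) = 0) (k : ℕ) :
    w ⬝ᵥ (A ^ k *ᵥ u) = 0 := by
  induction k generalizing u with
  | zero => simpa using dotProduct_eq_zero_of_forall_adjugate h
  | succ k ih =>
    rw [pow_succ, ← mulVec_mulVec]
    exact ih (dotProduct_adjugate_mulVec_mulVec_eq_zero h)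

end AdjugateLimit

section Circle

variable {n : ℕ}

lemma circPt_eq_circleMap : circPt = circleMap 0 1 := by
  ext θ
  simp [circPt, circleMap]

lemma infinite_circPt_image_Icc : (circPt '' Set.Icc 0 (2 * π)).Infinite := by
  rw [circPt_eq_circleMap]
  exact ((Set.Ico_infinite (by positivity : (0:ℝ) < 2 * π)).image
    (injOn_circleMap_of_abs_sub_le' one_ne_zero (by simp))).mono
    (Set.image_mono Set.Ico_subset_Icc_self)

lemma det_circPt_smul_one_sub_ne_zero {A : Mat n} (hA : IsStable A) (θ : ℝ) :
    (circPt θ • (1 : Mat n) - A).det ≠ 0 := by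
  have : circPt θ ∉ spectrum ℂ A := fun h => by
    simpa [circPt_eq_circleMap] using hA _ h
  rw [spectrum.notMem_iff, Algebra.algebraMap_eq_smul_one, isUnit_iff_isUnit_det] at this
  exact this.ne_zero

lemma continuous_Gm {A : Mat n} (hA : IsStable A) (B : Vec n) : Continuous (Gm A B) := by
  have hM : Continuous fun θ => circPt θ • (1 : Mat n) - A := by
    rw [circPt_eq_circleMap]; fun_prop
  unfold Gm
  simp only [inv_def, Ring.inverse_eq_inv']
  exact ((hM.matrix_det.inv₀ (det_circPt_smul_one_sub_ne_zero hA)).smul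
    hM.matrix_adjugate).matrix_mul continuous_const

end Circle

section Reachability

variable {n : ℕ}

def controllabilityMatrix (A : Mat n) (B : Vec n) : Mat n :=
  Matrix.of fun i k => (A ^ (k : ℕ) * B) i 0

lemma Reachable.isUnit_controllabilityMatrix {A : Mat n} {B : Vec n} (hR : Reachable A B) :
    IsUnit (controllabilityMatrix A B) := by
  have : LinearMap.range (controllabilityMatrix A B).mulVecLin = ⊤ :=
    Submodule.eq_top_of_finrank_eq (by rw [Module.finrank_fin_fun]; exact hR)
  exact mulVec_surjective_iff_isUnit.mp (LinearMap.range_eq_top.mp this)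

lemma Reachable.eq_zero_of_forall_dotProduct_pow_mulVec_eq_zero {A : Mat n} {B : Vec n}
    (hR : Reachable A B) {w : Fin n → ℂ} (h : ∀ k : ℕ, w ⬝ᵥ (A ^ k *ᵥ fun i => B i 0) = 0) :
    w = 0 := by
  have : w ᵥ* controllabilityMatrix A B = 0 ᵥ* controllabilityMatrix A B := by
    rw [zero_vecMul]
    exact funext fun k => h k
  exact vecMul_injective_iff_isUnit.mpr hR.isUnit_controllabilityMatrix this

lemma dotProduct_adjugate_mulVec_eq_zero_of_conjTranspose_Gm_mulVec_eq_zero {A : Mat n}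
    {B : Vec n} (hA : IsStable A) {v : Fin n → ℂ} {θ : ℝ} (h : (Gm A B θ)ᴴ *ᵥ v = 0) :
    star v ⬝ᵥ ((circPt θ • (1 : Mat n) - A).adjugate *ᵥ fun i => B i 0) = 0 := by
  have := congrFun (congrArg star h) 0
  rw [star_mulVec, conjTranspose_conjTranspose, Gm, inv_def, Ring.inverse_eq_inv',
    Matrix.smul_mul, vecMul_smul, ← vecMul_vecMul, Pi.smul_apply, smul_eq_mul, star_zero,
    Pi.zero_apply] at this
  rw [dotProduct_mulVec]
  exact (mul_eq_zero.mp this).resolve_left (inv_ne_zero (det_circPt_smul_one_sub_ne_zero hA θ))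

lemma Reachable.eq_zero_of_conjTranspose_Gm_mulVec_eq_zero {A : Mat n} {B : Vec n}
    (hR : Reachable A B) (hA : IsStable A) {v : Fin n → ℂ}
    (h : ∀ θ ∈ Set.Icc 0 (2 * π), (Gm A B θ)ᴴ *ᵥ v = 0) : v = 0 := by
  have hadj := dotProduct_adjugate_mulVec_eq_zero_of_infinite A (star v) _
    infinite_circPt_image_Icc fun _ ⟨θ, hθ, hz⟩ =>
      hz ▸ dotProduct_adjugate_mulVec_eq_zero_of_conjTranspose_Gm_mulVec_eq_zero hA (h θ hθ)
  simpa using hR.eq_zero_of_forall_dotProduct_pow_mulVec_eq_zero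
    (dotProduct_pow_mulVec_eq_zero_of_forall_adjugate hadj)

end Reachability

section MInt

variable {n : ℕ}

lemma dotProduct_mInt_mulVec {f : ℝ → Mat n} (hf : Continuous f) (w v : Fin n → ℂ) :
    w ⬝ᵥ (mInt f *ᵥ v) = (1 / (2 * π) : ℝ) • ∫ θ in (0:ℝ)..(2 * π), w ⬝ᵥ (f θ *ᵥ v) := by
  have hint : ∀ i j, IntervalIntegrable (fun θ => w i * (f θ i j * v j)) volume 0 (2 * π) :=
    fun i j => (by fun_prop : Continuous fun θ => w i * (f θ i j * v j)).intervalIntegrable _ _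
  have hsum : ∫ θ in (0:ℝ)..(2 * π), ∑ i, ∑ j, w i * (f θ i j * v j)
      = ∑ i, ∑ j, w i * ((∫ θ in (0:ℝ)..(2 * π), f θ i j) * v j) := by
    rw [intervalIntegral.integral_finsetSum fun i _ =>
      (by fun_prop : Continuous fun θ => ∑ j, w i * (f θ i j * v j)).intervalIntegrable _ _]
    refine Finset.sum_congr rfl fun i _ => ?_
    rw [intervalIntegral.integral_finsetSum fun j _ => hint i j]
    simp only [intervalIntegral.integral_const_mul, intervalIntegral.integral_mul_const]
  simp only [dotProduct, mulVec, Finset.mul_sum, hsum, Finset.smul_sum, mInt, of_apply,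
    smul_mul_assoc, mul_smul_comm]

lemma mInt_mul_mul {f : ℝ → Mat n} (hf : Continuous f) (P Q : Mat n) :
    mInt (fun θ => P * f θ * Q) = P * mInt f * Q := by
  ext i j
  have h : ∀ M : Mat n, (P * M * Q) i j = P i ⬝ᵥ (M *ᵥ fun l => Q l j) := fun M => by
    simp only [mul_apply, dotProduct, mulVec, Finset.mul_sum, Finset.sum_mul, mul_assoc]
    exact Finset.sum_comm
  rw [h, dotProduct_mInt_mulVec hf]
  simp only [mInt, of_apply, h]

lemma isHermitian_mInt {f : ℝ → Mat n} (hf : ∀ θ, (f θ).IsHermitian) :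
    (mInt f).IsHermitian := by
  ext i j
  simp only [conjTranspose_apply, mInt, of_apply, star_smul, star_trivial]
  rw [Complex.star_def, ← intervalIntegral.intervalIntegral_conj]
  simp_rw [← Complex.star_def, (hf _).apply]

end MInt

section Msqrt

variable {n : ℕ} {Λ : Mat n}

lemma msqrt_eq_cfc (hΛ : Λ.PosSemidef) : msqrt Λ = cfc Real.sqrt Λ := by
  rw [msqrt, dif_pos hΛ, hΛ.1.cfc_eq, IsHermitian.cfc, Unitary.conjStarAlgAut_apply]
  rfl

lemma isHermitian_msqrt (hΛ : Λ.PosSemidef) : (msqrt Λ).IsHermitian := by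
  rw [msqrt_eq_cfc hΛ]
  exact cfc_predicate Real.sqrt Λ

lemma msqrt_mul_self (hΛ : Λ.PosSemidef) : msqrt Λ * msqrt Λ = Λ := by
  have hspec : (spectrum ℝ Λ).EqOn (fun x => Real.sqrt x * Real.sqrt x) id := by
    rw [hΛ.1.spectrum_real_eq_range_eigenvalues]
    rintro _ ⟨i, rfl⟩
    exact Real.mul_self_sqrt (hΛ.eigenvalues_nonneg i)
  rw [msqrt_eq_cfc hΛ, ← cfc_mul .., cfc_congr hspec]
  exact cfc_id ℝ Λ hΛ.1

end Msqrt

section Moment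

variable {n : ℕ} {A : Mat n} {B : Vec n} {Ψ : ℝ → ℝ} {Λ : Mat n}

lemma continuous_quad (hA : IsStable A) : Continuous (quad A B Λ) := by
  have hG := continuous_Gm hA B
  unfold quad
  fun_prop

lemma ofReal_re_quad (hΛ : Λ.IsHermitian) (θ : ℝ) : ((quad A B Λ θ).re : ℂ) = quad A B Λ θ :=
  Complex.conj_eq_iff_re.mp ((isHermitian_conjTranspose_mul_mul (Gm A B θ) hΛ).apply 0 0)

lemma continuous_moment_integrand (hA : IsStable A) (hΨc : Continuous Ψ)
    (hq : ∀ θ, quad A B Λ θ ≠ 0) :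
    Continuous fun θ => ((Ψ θ : ℂ) / quad A B Λ θ) • (Gm A B θ * (Gm A B θ)ᴴ) := by
  have hG := continuous_Gm hA B
  exact ((Complex.continuous_ofReal.comp hΨc).div (continuous_quad hA) hq).smul
    (hG.matrix_mul hG.matrix_conjTranspose)

lemma ofReal_div_re_quad (hΛ : Λ.IsHermitian) (θ : ℝ) :
    ((Ψ θ / (quad A B Λ θ).re : ℝ) : ℂ) = Ψ θ / quad A B Λ θ := by
  rw [Complex.ofReal_div, ofReal_re_quad hΛ]

lemma isHermitian_moment (hΛ : Λ.IsHermitian) : (moment A B Ψ Λ).IsHermitian :=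
  isHermitian_mInt fun θ => by
    rw [← ofReal_div_re_quad hΛ]
    exact (isHermitian_mul_conjTranspose_self _).smul (Complex.conj_ofReal _)

lemma star_dotProduct_moment_mulVec (hA : IsStable A) (hΨc : Continuous Ψ) (hΛ : Λ.IsHermitian)
    (hq : ∀ θ, quad A B Λ θ ≠ 0) (v : Fin n → ℂ) :
    star v ⬝ᵥ (moment A B Ψ Λ *ᵥ v) = ((1 / (2 * π) * ∫ θ in (0:ℝ)..(2 * π),
      Ψ θ / (quad A B Λ θ).re * Complex.normSq (((Gm A B θ)ᴴ *ᵥ v) 0) : ℝ) : ℂ) := by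
  rw [moment, dotProduct_mInt_mulVec (continuous_moment_integrand hA hΨc hq)]
  simp only [smul_mulVec, dotProduct_smul, ← ofReal_div_re_quad hΛ,
    star_dotProduct_mul_conjTranspose_mulVec, smul_eq_mul, ← Complex.ofReal_mul,
    intervalIntegral.integral_ofReal, Complex.real_smul]

lemma moment_posDef (hA : IsStable A) (hR : Reachable A B) (hΨc : Continuous Ψ)
    (hΨpos : ∀ θ, 0 < Ψ θ) (hΛ : Λ.IsHermitian) (hq : ∀ θ, 0 < (quad A B Λ θ).re) :
    (moment A B Ψ Λ).PosDef := by
  refine .of_dotProduct_mulVec_pos (isHermitian_moment hΛ) fun v hv => ?_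
  obtain ⟨θ₀, hθ₀, hne⟩ : ∃ θ ∈ Set.Icc 0 (2 * π), (Gm A B θ)ᴴ *ᵥ v ≠ 0 := by
    by_contra! h
    exact hv (hR.eq_zero_of_conjTranspose_Gm_mulVec_eq_zero hA h)
  have hne₀ : ((Gm A B θ₀)ᴴ *ᵥ v) 0 ≠ 0 := fun h => hne (funext fun i => by
    rwa [Subsingleton.elim i 0])
  have hG := continuous_Gm hA B
  have hqre : Continuous fun θ => (quad A B Λ θ).re :=
    Complex.continuous_re.comp (continuous_quad hA)
  rw [star_dotProduct_moment_mulVec hA hΨc hΛ (fun θ => Complex.ne_zero_of_re_pos (hq θ)),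
    Complex.zero_lt_real]
  refine mul_pos (by positivity) (intervalIntegral.integral_pos (by positivity) ?_
    (fun θ _ => mul_nonneg (div_nonneg (hΨpos θ).le (hq θ).le) (Complex.normSq_nonneg _))
    ⟨θ₀, hθ₀, mul_pos (div_pos (hΨpos θ₀) (hq θ₀)) (Complex.normSq_pos.mpr hne₀)⟩)
  exact ((hΨc.div hqre fun θ => (hq θ).ne').mul
    (Complex.continuous_normSq.comp (by fun_prop))).continuousOn

lemma Theta_eq_msqrt_mul_moment_mul_msqrt (hA : IsStable A) (hΨc : Continuous Ψ)
    (hq : ∀ θ, quad A B Λ θ ≠ 0) :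
    Theta A B Ψ Λ = msqrt Λ * moment A B Ψ Λ * msqrt Λ := by
  rw [moment, ← mInt_mul_mul (continuous_moment_integrand hA hΨc hq), Theta]
  simp only [Matrix.mul_smul, Matrix.smul_mul]

end Moment

/-- Θ(Λ) has the same kernel (hence rank) as Λ, and preserves
positive definiteness. -/
theorem stmt2 {n : ℕ} (A : Mat n) (B : Vec n) (Ψ : ℝ → ℝ) (Λ : Mat n)
    (hA : IsStable A) (hR : Reachable A B)
    (hΨc : Continuous Ψ) (hΨpos : ∀ θ, 0 < Ψ θ)
    (hΛ : Λ.PosSemidef)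
    (hq : ∀ θ, 0 < (quad A B Λ θ).re) :
    (∀ v : Fin n → ℂ, Theta A B Ψ Λ *ᵥ v = 0 ↔ Λ *ᵥ v = 0) ∧
    (Theta A B Ψ Λ).rank = Λ.rank ∧
    (Λ.PosDef → (Theta A B Ψ Λ).PosDef) := by
  have hΘ : Theta A B Ψ Λ = msqrt Λ * moment A B Ψ Λ * msqrt Λ :=
    Theta_eq_msqrt_mul_moment_mul_msqrt hA hΨc fun θ => Complex.ne_zero_of_re_pos (hq θ)
  have hM := moment_posDef hA hR hΨc hΨpos hΛ.1 hq
  have hS := isHermitian_msqrt hΛ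
  have hker v : Theta A B Ψ Λ *ᵥ v = 0 ↔ Λ *ᵥ v = 0 := by
    rw [hΘ, hM.mul_mul_mulVec_eq_zero_iff hS]
    exact hS.mulVec_eq_zero_iff_of_mul_self_eq (msqrt_mul_self hΛ) v
  refine ⟨hker, rank_eq_of_mulVec_eq_zero_iff hker, fun hΛpd => ?_⟩
  have hpsd : (Theta A B Ψ Λ).PosSemidef := by
    simpa [hΘ, hS.eq] using hM.posSemidef.conjTranspose_mul_mul_same (msqrt Λ)
  exact hpsd.posDef_iff_isUnit.mpr ((isUnit_iff_of_mulVec_eq_zero_iff hker).mpr hΛpd.isUnit)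
end
end

section
/- Let G(z) = (zI-A)^{-1}B with (A,B) reachable, and let Λ be Hermitian with G*ΛG > 0 on the unit circle. Let P be the stabilizing Hermitian solution of the algebraic Riccati equation Π = A*ΠA - A*ΠB(B*ΠB)^{-1}B*ΠA + Λ (so that Z := A - B(B*PB)^{-1}B*PA has spectrum in the open unit disc, and B*PB > 0). Then G*(z)ΛG(z) = W*(z)W(z) on the unit circle, where W(z) = (B*PB)^{-1/2} B*PA (zI-A)^{-1} B + (B*PB)^{1/2}. -/
/-!
On the unit circle `g = G(z)` satisfies `A g = z g - B` with `z̄ z = 1`, and expanding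
`gᴴ Aᴴ P A g` with these two relations gives `gᴴ (P - AᴴPA) g = u + uᴴ + BᴴPB` for
`u = BᴴPA g`: this is the vanishing of the form `[G*, 1] [[A*PA - P, A*PB], [B*PA, B*PB]] [G; 1]`.
The Riccati equation turns `gᴴ Λ g` into this plus `uᴴ (BᴴPB)⁻¹ u`, and writing the scalar
`BᴴPB = c²` the result is `(c⁻¹ u + c)ᴴ (c⁻¹ u + c) = W*W`.
-/

open Matrix MeasureTheory Real Filter
open scoped ComplexOrder

noncomputable section

/-- The spectral factor W(z) = (B*PB)^{-1/2} B*PA (zI-A)⁻¹ B + (B*PB)^{1/2}. -/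
def Wfac {n : ℕ} (A : Mat n) (B : Vec n) (P : Mat n) (θ : ℝ) :
    Matrix (Fin 1) (Fin 1) ℂ :=
  ((Real.sqrt ((Bᴴ * P * B) 0 0).re)⁻¹ : ℝ) •
      (Bᴴ * P * A * (circPt θ • (1 : Mat n) - A)⁻¹ * B)
    + (Real.sqrt ((Bᴴ * P * B) 0 0).re : ℝ) • (1 : Matrix (Fin 1) (Fin 1) ℂ)

theorem star_circPt_mul_self (θ : ℝ) : star (circPt θ) * circPt θ = 1 := by
  rw [Complex.star_def, Complex.conj_mul', circPt, Complex.norm_exp_ofReal_mul_I]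
  norm_num

theorem mul_resolvent_mul_eq_smul_sub {R n m : Type*} [CommRing R] [Fintype n] [DecidableEq n]
    {A : Matrix n n R} (B : Matrix n m R) {z : R} (hA : IsUnit (z • (1 : Matrix n n R) - A)) :
    A * ((z • 1 - A)⁻¹ * B) = z • ((z • 1 - A)⁻¹ * B) - B := by
  have hB := mul_nonsing_inv_cancel_left (z • 1 - A) B ((isUnit_iff_isUnit_det _).mp hA)
  rw [Matrix.sub_mul, Matrix.smul_mul, Matrix.one_mul] at hB
  -- `set` keeps the rewrite below away from the `B` inside the resolvent term
  set X := (z • 1 - A)⁻¹ * B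
  rw [← hB]
  abel

section Riccati

variable {R : Type*} [CommRing R] [StarRing R] {n m : Type*} [Fintype n]

theorem conjTranspose_mul_stein_mul_eq {A P : Matrix n n R} {B g : Matrix n m R} {z : R}
    (hz : star z * z = 1) (hg : A * g = z • g - B) :
    gᴴ * (P - Aᴴ * P * A) * g = Bᴴ * P * A * g + gᴴ * Aᴴ * P * B + Bᴴ * P * B := by
  have hgA : gᴴ * Aᴴ = star z • gᴴ - Bᴴ := by
    rw [← conjTranspose_mul, hg, conjTranspose_sub, conjTranspose_smul]
  simp only [Matrix.mul_assoc, Matrix.mul_sub, Matrix.sub_mul, hg]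
  simp only [← Matrix.mul_assoc, hgA]
  simp only [Matrix.sub_mul, Matrix.smul_mul, Matrix.mul_smul, smul_sub, smul_smul, hz,
    one_smul, mul_comm z (star z)]
  abel

theorem conjTranspose_mul_riccati_mul_eq [Fintype m] [DecidableEq m] {A P Λ : Matrix n n R}
    {B g : Matrix n m R} {z : R}
    (hRic : P = Aᴴ * P * A - Aᴴ * P * B * (Bᴴ * P * B)⁻¹ * (Bᴴ * P * A) + Λ)
    (hz : star z * z = 1) (hg : A * g = z • g - B) :
    gᴴ * Λ * g = Bᴴ * P * A * g + gᴴ * Aᴴ * P * B + Bᴴ * P * B +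
      gᴴ * Aᴴ * P * B * (Bᴴ * P * B)⁻¹ * (Bᴴ * P * A * g) := by
  have hΛ : Λ = (P - Aᴴ * P * A) + Aᴴ * P * B * (Bᴴ * P * B)⁻¹ * (Bᴴ * P * A) := by
    nth_rw 1 [hRic]; abel
  rw [← conjTranspose_mul_stein_mul_eq hz hg, hΛ, Matrix.mul_add, Matrix.add_mul]
  simp only [Matrix.mul_assoc]

end Riccati

theorem inv_real_smul_one {𝕜 m : Type*} [RCLike 𝕜] [Fintype m] [DecidableEq m] {a : ℝ}
    (ha : a ≠ 0) : (a • (1 : Matrix m m 𝕜))⁻¹ = a⁻¹ • 1 :=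
  inv_eq_left_inv (by rw [smul_mul_smul_comm, inv_mul_cancel₀ ha, one_smul, Matrix.one_mul])

theorem smul_add_smul_one_conjTranspose_mul_self {𝕜 m : Type*} [RCLike 𝕜] [Fintype m]
    [DecidableEq m] (u : Matrix m m 𝕜) {c : ℝ} (hc : c ≠ 0) :
    (c⁻¹ • u + c • 1)ᴴ * (c⁻¹ • u + c • 1) =
      u + uᴴ + (c ^ 2) • 1 + uᴴ * ((c ^ 2) • (1 : Matrix m m 𝕜))⁻¹ * u := by
  rw [inv_real_smul_one (pow_ne_zero 2 hc), conjTranspose_add, conjTranspose_smul,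
    conjTranspose_smul, conjTranspose_one, star_trivial, star_trivial]
  simp only [Matrix.add_mul, Matrix.mul_add, Matrix.smul_mul, Matrix.mul_smul, Matrix.mul_one,
    Matrix.one_mul, smul_add, smul_smul, inv_mul_cancel₀ hc, mul_inv_cancel₀ hc, one_smul,
    ← sq, inv_pow]
  abel

theorem eq_re_smul_one_of_isHermitian {M : Matrix (Fin 1) (Fin 1) ℂ} (hM : M.IsHermitian) :
    M = (M 0 0).re • 1 := by
  ext i j
  fin_cases i; fin_cases j
  simpa using (hM.coe_re_apply_self 0).symm

theorem stmt18_general {n : ℕ} (A : Mat n) (B : Vec n) (Λ P : Mat n)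
    (hU : ∀ θ : ℝ, IsUnit (circPt θ • (1 : Mat n) - A))
    (hP : P.IsHermitian)
    (hRic : P = Aᴴ * P * A - Aᴴ * P * B * (Bᴴ * P * B)⁻¹ * (Bᴴ * P * A) + Λ)
    (hBPB : 0 < ((Bᴴ * P * B) 0 0).re) :
    ∀ θ : ℝ, quad A B Λ θ = ((Wfac A B P θ)ᴴ * Wfac A B P θ) 0 0 := by
  intro θ
  set g := Gm A B θ
  set c := Real.sqrt ((Bᴴ * P * B) 0 0).re
  have hg : A * g = circPt θ • g - B := mul_resolvent_mul_eq_smul_sub B (hU θ)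
  have hK : Bᴴ * P * B = (c ^ 2) • 1 := by
    rw [Real.sq_sqrt hBPB.le]
    exact eq_re_smul_one_of_isHermitian (isHermitian_conjTranspose_mul_mul B hP)
  have hu : (Bᴴ * P * A * g)ᴴ = gᴴ * Aᴴ * P * B := by
    simp only [conjTranspose_mul, conjTranspose_conjTranspose, hP.eq, Matrix.mul_assoc]
  have hW : Wfac A B P θ = c⁻¹ • (Bᴴ * P * A * g) + c • 1 := by
    rw [Wfac, Matrix.mul_assoc (Bᴴ * P * A)]
    rfl
  suffices gᴴ * Λ * g = (Wfac A B P θ)ᴴ * Wfac A B P θ from congrFun (congrFun this 0) 0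
  rw [conjTranspose_mul_riccati_mul_eq hRic (star_circPt_mul_self θ) hg, hW,
    smul_add_smul_one_conjTranspose_mul_self _ (Real.sqrt_pos.mpr hBPB).ne', hu, ← hK]

/-- spectral factorization G*ΛG = W*W on the unit circle, with W
built from the stabilizing solution P of the algebraic Riccati equation. -/
theorem stmt18 {n : ℕ} (A : Mat n) (B : Vec n) (Λ P : Mat n)
    (hR : Reachable A B) (hΛ : Λ.IsHermitian)
    (hU : ∀ θ : ℝ, IsUnit (circPt θ • (1 : Mat n) - A))
    (hq : ∀ θ, 0 < (quad A B Λ θ).re)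
    (hP : P.IsHermitian)
    (hRic : P = Aᴴ * P * A - Aᴴ * P * B * (Bᴴ * P * B)⁻¹ * (Bᴴ * P * A) + Λ)
    (hBPB : 0 < ((Bᴴ * P * B) 0 0).re)
    (hstab : ∀ μ ∈ spectrum ℂ (A - B * (Bᴴ * P * B)⁻¹ * (Bᴴ * P * A)), ‖μ‖ < 1) :
    ∀ θ : ℝ, quad A B Λ θ = ((Wfac A B P θ)ᴴ * Wfac A B P θ) 0 0 :=
  stmt18_general A B Λ P hU hP hRic hBPB
end
end

section
/- Under the setup of the spectral factorization lemma, the spectral factor W(z) = (B*PB)^{-1/2} B*PA(zI-A)^{-1}B + (B*PB)^{1/2} satisfies W(z) = z·(B*PB)^{-1/2} B*P (zI-A)^{-1} B; consequently G*ΛG = W_1* W_1 with W_1(z) := (B*PB)^{-1/2} B*P (zI-A)^{-1} B, and hence there exists a vector C_∘ ∈ C^{n×1} (namely C_∘ = ((B*PB)^{-1/2}B*P)*) such that G*ΛG = G* C_∘ C_∘* G on the unit circle. -/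
open Matrix MeasureTheory Real Filter
open scoped ComplexOrder

noncomputable section

/-- W₁(z) = (B*PB)^{-1/2} B*P (zI-A)⁻¹ B. -/
def W1fac {n : ℕ} (A : Mat n) (B : Vec n) (P : Mat n) (θ : ℝ) :
    Matrix (Fin 1) (Fin 1) ℂ :=
  ((Real.sqrt ((Bᴴ * P * B) 0 0).re)⁻¹ : ℝ) •
    (Bᴴ * P * (circPt θ • (1 : Mat n) - A)⁻¹ * B)

/-! On the unit circle `z (zI - A)⁻¹ = A (zI - A)⁻¹ + I`, so `G = (zI - A)⁻¹ B` satisfies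
`z G = A G + B`. Substituting this into the Riccati equation completes a square:
`G*ΛG = (K + B*PAG)* K⁻¹ (K + B*PAG)` with `K = B*PB`, which is `W*W` since `K` is the positive
scalar `c²`, `c = √(B*PB)`. Moreover `K + B*PAG = z B*PG`, so `W = z W₁`, and `|z| = 1` gives
`W*W = W₁*W₁ = G* C∘ C∘* G`. -/

section Riccati

variable {R m p q : Type*} [CommRing R] [Fintype m]

theorem smul_inv_sub_mul [DecidableEq m] {z : R} {A : Matrix m m R} (h : IsUnit (z • 1 - A))
    (B : Matrix m p R) : z • ((z • 1 - A)⁻¹ * B) = A * ((z • 1 - A)⁻¹ * B) + B := by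
  have hinv : (z • 1 - A) * (z • 1 - A)⁻¹ = 1 :=
    mul_nonsing_inv _ ((isUnit_iff_isUnit_det _).mp h)
  rw [Matrix.sub_mul, Matrix.smul_mul, Matrix.one_mul, sub_eq_iff_eq_add'] at hinv
  rw [← Matrix.smul_mul, hinv, Matrix.add_mul, Matrix.one_mul, Matrix.mul_assoc]

variable [StarRing R]

theorem conjTranspose_smul_mul_smul {z : R} (hz : star z * z = 1) (X : Matrix m p R)
    (Y : Matrix m q R) : (z • X)ᴴ * (z • Y) = Xᴴ * Y := by
  rw [conjTranspose_smul, Matrix.smul_mul, Matrix.mul_smul, smul_smul, hz, one_smul]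

theorem conjTranspose_mul_sub_mul_of_smul_eq {z : R} (hz : star z * z = 1)
    {A P : Matrix m m R} {B g : Matrix m p R} (hP : P.IsHermitian) (hg : z • g = A * g + B) :
    gᴴ * (P - Aᴴ * P * A) * g = Bᴴ * P * B + Bᴴ * P * A * g + (Bᴴ * P * A * g)ᴴ := by
  have hPg : gᴴ * (P * g) = (A * g + B)ᴴ * (P * (A * g + B)) := by
    rw [← hg, Matrix.mul_smul, conjTranspose_smul_mul_smul hz]
  simp only [conjTranspose_mul, conjTranspose_add, conjTranspose_conjTranspose, hP.eq,
    Matrix.sub_mul, Matrix.mul_sub, Matrix.add_mul, Matrix.mul_add, Matrix.mul_assoc] at hPg ⊢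
  rw [hPg]
  abel

variable [Fintype p] [DecidableEq p]

theorem add_conjTranspose_mul_inv_mul_add {K : Matrix p p R} (hK : Kᴴ = K)
    (hdet : IsUnit K.det) (v : Matrix p p R) :
    (K + v)ᴴ * K⁻¹ * (K + v) = K + v + vᴴ + vᴴ * K⁻¹ * v := by
  simp only [conjTranspose_add, hK, Matrix.add_mul, Matrix.mul_add, mul_nonsing_inv _ hdet,
    Matrix.one_mul, Matrix.mul_assoc vᴴ, nonsing_inv_mul _ hdet, Matrix.mul_one]
  abel

theorem conjTranspose_mul_mul_eq_of_riccati {z : R} (hz : star z * z = 1)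
    {A P Λ : Matrix m m R} {B g : Matrix m p R} (hP : P.IsHermitian)
    (hK : IsUnit (Bᴴ * P * B).det)
    (hRic : P = Aᴴ * P * A - Aᴴ * P * B * (Bᴴ * P * B)⁻¹ * (Bᴴ * P * A) + Λ)
    (hg : z • g = A * g + B) :
    gᴴ * Λ * g = (Bᴴ * P * B + Bᴴ * P * A * g)ᴴ * (Bᴴ * P * B)⁻¹ *
      (Bᴴ * P * B + Bᴴ * P * A * g) := by
  have hΛ : Λ = (P - Aᴴ * P * A) + (Bᴴ * P * A)ᴴ * (Bᴴ * P * B)⁻¹ * (Bᴴ * P * A) := by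
    rw [conjTranspose_mul, conjTranspose_mul, hP.eq, conjTranspose_conjTranspose,
      eq_sub_of_add_eq' hRic.symm]
    simp only [Matrix.mul_assoc]
    abel
  have hKh : (Bᴴ * P * B)ᴴ = Bᴴ * P * B := by
    rw [conjTranspose_mul, conjTranspose_mul, hP.eq, conjTranspose_conjTranspose,
      Matrix.mul_assoc]
  rw [add_conjTranspose_mul_inv_mul_add hKh hK, hΛ, Matrix.mul_add, Matrix.add_mul,
    conjTranspose_mul_sub_mul_of_smul_eq hz hP hg, conjTranspose_mul]
  simp only [Matrix.mul_assoc]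

end Riccati

theorem Matrix.IsHermitian.eq_re_smul_one {M : Matrix (Fin 1) (Fin 1) ℂ} (hM : M.IsHermitian) :
    M = (M 0 0).re • (1 : Matrix (Fin 1) (Fin 1) ℂ) := by
  ext i j
  fin_cases i; fin_cases j
  simpa [Complex.ext_iff] using (hM.coe_re_apply_self 0).symm

theorem conjTranspose_smul_mul_inv_mul_smul {p q : Type*} [Fintype p] [DecidableEq p] {c : ℝ}
    {K : Matrix p p ℂ} (hc : c ≠ 0) (hK : K = c ^ 2 • 1) (X : Matrix p q ℂ) :
    (c • X)ᴴ * K⁻¹ * (c • X) = Xᴴ * X := by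
  have hinv : K⁻¹ = (c ^ 2)⁻¹ • 1 := by
    rw [hK]
    refine inv_eq_left_inv ?_
    rw [smul_mul_smul_comm, inv_mul_cancel₀ (pow_ne_zero 2 hc), one_smul, Matrix.one_mul]
  have hscalar : c * ((c ^ 2)⁻¹ * c) = 1 := by field_simp
  simp only [hinv, conjTranspose_smul, star_trivial, Matrix.mul_smul, Matrix.smul_mul,
    Matrix.mul_one, smul_smul, hscalar, one_smul]

theorem conjTranspose_mul_mul_eq_sqrt_sq_smul_one {m : Type*} [Fintype m] {P : Matrix m m ℂ}
    (hP : P.IsHermitian) (B : Matrix m (Fin 1) ℂ) (hpos : 0 ≤ ((Bᴴ * P * B) 0 0).re) :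
    Bᴴ * P * B = Real.sqrt ((Bᴴ * P * B) 0 0).re ^ 2 • (1 : Matrix (Fin 1) (Fin 1) ℂ) := by
  rw [Real.sq_sqrt hpos]
  exact (isHermitian_conjTranspose_mul_mul B hP).eq_re_smul_one

section SpectralFactor

variable {n : ℕ} (A : Mat n) (B : Vec n) (P : Mat n) (θ : ℝ)

theorem sqrt_smul_Wfac (hP : P.IsHermitian) (hpos : 0 < ((Bᴴ * P * B) 0 0).re) :
    Real.sqrt ((Bᴴ * P * B) 0 0).re • Wfac A B P θ = Bᴴ * P * B + Bᴴ * P * A * Gm A B θ := by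
  have hs : Real.sqrt ((Bᴴ * P * B) 0 0).re ≠ 0 := (Real.sqrt_pos.mpr hpos).ne'
  rw [Wfac, smul_add, smul_smul, smul_smul, mul_inv_cancel₀ hs, one_smul, ← pow_two,
    ← conjTranspose_mul_mul_eq_sqrt_sq_smul_one hP B hpos.le, Gm, Matrix.mul_assoc _ _ B,
    add_comm]

theorem sqrt_smul_W1fac (hpos : 0 < ((Bᴴ * P * B) 0 0).re) :
    Real.sqrt ((Bᴴ * P * B) 0 0).re • W1fac A B P θ = Bᴴ * P * Gm A B θ := by
  rw [W1fac, smul_smul, mul_inv_cancel₀ (Real.sqrt_pos.mpr hpos).ne', one_smul, Gm,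
    Matrix.mul_assoc _ _ B]

theorem W1fac_conjTranspose_mul_self :
    (W1fac A B P θ)ᴴ * W1fac A B P θ =
      (Gm A B θ)ᴴ *
        ((((Real.sqrt ((Bᴴ * P * B) 0 0).re)⁻¹ : ℝ) • (Bᴴ * P)ᴴ) *
         (((Real.sqrt ((Bᴴ * P * B) 0 0).re)⁻¹ : ℝ) • (Bᴴ * P)ᴴ)ᴴ) * Gm A B θ := by
  simp only [W1fac, Gm, conjTranspose_smul, conjTranspose_mul, conjTranspose_conjTranspose,
    star_trivial, Matrix.mul_assoc, Matrix.smul_mul, Matrix.mul_smul]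

end SpectralFactor

theorem stmt19_general {n : ℕ} (A : Mat n) (B : Vec n) (Λ P : Mat n)
    (hU : ∀ θ : ℝ, IsUnit (circPt θ • (1 : Mat n) - A))
    (hP : P.IsHermitian)
    (hRic : P = Aᴴ * P * A - Aᴴ * P * B * (Bᴴ * P * B)⁻¹ * (Bᴴ * P * A) + Λ)
    (hBPB : 0 < ((Bᴴ * P * B) 0 0).re) :
    (∀ θ : ℝ, Wfac A B P θ = circPt θ • W1fac A B P θ) ∧
    (∀ θ : ℝ, quad A B Λ θ = ((W1fac A B P θ)ᴴ * W1fac A B P θ) 0 0) ∧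
    (∀ θ : ℝ, quad A B Λ θ =
      ((Gm A B θ)ᴴ *
        ((((Real.sqrt ((Bᴴ * P * B) 0 0).re)⁻¹ : ℝ) • (Bᴴ * P)ᴴ) *
         (((Real.sqrt ((Bᴴ * P * B) 0 0).re)⁻¹ : ℝ) • (Bᴴ * P)ᴴ)ᴴ) *
        Gm A B θ) 0 0) := by
  have hc : Real.sqrt ((Bᴴ * P * B) 0 0).re ≠ 0 := (Real.sqrt_pos.mpr hBPB).ne'
  have hK := conjTranspose_mul_mul_eq_sqrt_sq_smul_one hP B hBPB.le
  have hKdet : IsUnit (Bᴴ * P * B).det := by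
    rw [congrArg det hK]
    simp [hc]
  have hzG (θ : ℝ) : circPt θ • Gm A B θ = A * Gm A B θ + B := smul_inv_sub_mul (hU θ) B
  have hfactor (θ : ℝ) :
      Bᴴ * P * B + Bᴴ * P * A * Gm A B θ = circPt θ • (Bᴴ * P * Gm A B θ) := by
    rw [← Matrix.mul_smul, hzG, Matrix.mul_add, add_comm, Matrix.mul_assoc _ A]
  have hW (θ : ℝ) : Wfac A B P θ = circPt θ • W1fac A B P θ := by
    refine smul_right_injective _ hc ?_
    beta_reduce
    rw [sqrt_smul_Wfac A B P θ hP hBPB, smul_comm, sqrt_smul_W1fac A B P θ hBPB, hfactor]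
  have hquad (θ : ℝ) : quad A B Λ θ = ((W1fac A B P θ)ᴴ * W1fac A B P θ) 0 0 := by
    rw [quad, conjTranspose_mul_mul_eq_of_riccati (star_circPt_mul_self θ) hP hKdet hRic (hzG θ),
      ← sqrt_smul_Wfac A B P θ hP hBPB, conjTranspose_smul_mul_inv_mul_smul hc hK, hW,
      conjTranspose_smul_mul_smul (star_circPt_mul_self θ)]
  exact ⟨hW, hquad, fun θ => by rw [hquad, W1fac_conjTranspose_mul_self]⟩

/-- W = z·W₁ on the circle, hence G*ΛG = W₁*W₁, and with
C∘ = ((B*PB)^{-1/2} B*P)* one has G*ΛG = G* C∘ C∘* G on the unit circle. -/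
theorem stmt19 {n : ℕ} (A : Mat n) (B : Vec n) (Λ P : Mat n)
    (hR : Reachable A B) (hΛ : Λ.IsHermitian)
    (hU : ∀ θ : ℝ, IsUnit (circPt θ • (1 : Mat n) - A))
    (hq : ∀ θ, 0 < (quad A B Λ θ).re)
    (hP : P.IsHermitian)
    (hRic : P = Aᴴ * P * A - Aᴴ * P * B * (Bᴴ * P * B)⁻¹ * (Bᴴ * P * A) + Λ)
    (hBPB : 0 < ((Bᴴ * P * B) 0 0).re)
    (hstab : ∀ μ ∈ spectrum ℂ (A - B * (Bᴴ * P * B)⁻¹ * (Bᴴ * P * A)), ‖μ‖ < 1) :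
    (∀ θ : ℝ, Wfac A B P θ = circPt θ • W1fac A B P θ) ∧
    (∀ θ : ℝ, quad A B Λ θ = ((W1fac A B P θ)ᴴ * W1fac A B P θ) 0 0) ∧
    (∀ θ : ℝ, quad A B Λ θ =
      ((Gm A B θ)ᴴ *
        ((((Real.sqrt ((Bᴴ * P * B) 0 0).re)⁻¹ : ℝ) • (Bᴴ * P)ᴴ) *
         (((Real.sqrt ((Bᴴ * P * B) 0 0).re)⁻¹ : ℝ) • (Bᴴ * P)ᴴ)ᴴ) *
        Gm A B θ) 0 0) :=
  stmt19_general A B Λ P hU hP hRic hBPB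
end
end
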